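/- arXiv:1305.4610 — 2 statements merged into one kernel-verified Lean document; each statement's English description precedes it below -/
import Mathlib

section
/- Let α_{ij} ≥ 0 and suppose (d_1,...,d_K) with all d_i ≥ 0 violates some cycle bound: there is a cyclic sequence of distinct indices (i_0, i_1,...,i_m), i_0 = i_m, m ≥ 2, with d_{i_j} > 0 for all j and ∑_{j=1}^m d_{i_j} > ∑_{j=1}^m (α_{i_j i_j} − α_{i_{j-1} i_j}). Then there are no real numbers r_1,...,r_K ≤ 0 with d_i = α_{ii} + r_i − max{0, max_{k≠i}(α_{ik} + r_k)} for all i in the cycle. -/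
/-- Cyclic predecessor in `Fin m`. -/
def cprev {m : ℕ} (j : Fin m) : Fin m := ⟨(j.1 + m - 1) % m, Nat.mod_lt _ j.pos⟩

/-!
For each index `a = i (cprev j)` of the cycle, its successor `b = i j` is one of the
interferers in the maximum, so `d a ≤ α a a + r a - (α a b + r b)`. Summing over the cycle,
the `r`-terms telescope away and what is left is exactly the cycle bound that `d` violates.
-/

open Finset

lemma cprev_injective (m : ℕ) : Function.Injective (cprev : Fin m → Fin m) := by
  intro a b h
  have hab : a.1 + (m - 1) ≡ b.1 + (m - 1) [MOD m] := by
    have := congrArg Fin.val h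
    simp only [cprev] at this
    rwa [Nat.add_sub_assoc a.pos, Nat.add_sub_assoc a.pos] at this
  exact Fin.ext (Nat.ModEq.eq_of_lt_of_lt (Nat.ModEq.add_right_cancel' _ hab) a.2 b.2)

lemma cprev_ne {m : ℕ} (hm : 2 ≤ m) (j : Fin m) : cprev j ≠ j := by
  intro h
  have hmod : j.1 + (m - 1) ≡ j.1 + 0 [MOD m] := by
    have := congrArg Fin.val h
    simp only [cprev] at this
    rw [Nat.ModEq, ← Nat.add_sub_assoc j.pos, this, add_zero, Nat.mod_eq_of_lt j.2]
  have := Nat.ModEq.add_left_cancel' j.1 hmod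
  rw [Nat.ModEq, Nat.mod_eq_of_lt (by omega), Nat.zero_mod] at this
  omega

lemma sum_comp_cprev {M : Type*} [AddCommMonoid M] {m : ℕ} (f : Fin m → M) :
    ∑ j, f (cprev j) = ∑ j, f j :=
  Fintype.sum_bijective _ (Finite.injective_iff_bijective.mp (cprev_injective m)) _ _
    fun _ => rfl

lemma le_max_iSup_ne {ι : Type*} [Finite ι] (g : ι → ℝ) {a b : ι} (hba : b ≠ a) :
    g b ≤ max 0 (⨆ k : {k // k ≠ a}, g k) :=
  (le_ciSup (Set.finite_range fun k : {k // k ≠ a} => g k).bddAbove ⟨b, hba⟩).trans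
    (le_max_right _ _)

theorem stmt_13_general (K : ℕ) (α : Fin K → Fin K → ℝ)
    (d : Fin K → ℝ)
    (m : ℕ) (hm : 2 ≤ m) (i : Fin m → Fin K) (hinj : Function.Injective i)
    (hviol : ∑ j : Fin m, (α (i j) (i j) - α (i (cprev j)) (i j)) <
      ∑ j : Fin m, d (i j)) :
    ¬ ∃ r : Fin K → ℝ, (∀ i, r i ≤ 0) ∧
      ∀ j : Fin m, d (i j) = α (i j) (i j) + r (i j) -
        max 0 (⨆ k : {k : Fin K // k ≠ i j}, (α (i j) k.1 + r k.1)) := by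
  rintro ⟨r, -, hr⟩
  have step (j : Fin m) : d (i (cprev j)) ≤
      α (i (cprev j)) (i (cprev j)) + r (i (cprev j)) - (α (i (cprev j)) (i j) + r (i j)) := by
    rw [hr]
    linarith [le_max_iSup_ne (fun k => α (i (cprev j)) k + r k) (hinj.ne (cprev_ne hm j).symm)]
  refine hviol.not_ge ?_
  calc ∑ j, d (i j) = ∑ j, d (i (cprev j)) := (sum_comp_cprev fun j => d (i j)).symm
    _ ≤ ∑ j, (α (i (cprev j)) (i (cprev j)) + r (i (cprev j))
          - (α (i (cprev j)) (i j) + r (i j))) := sum_le_sum fun j _ => step j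
    _ = ∑ j, (α (i j) (i j) - α (i (cprev j)) (i j)) := by
      simp only [sum_sub_distrib, sum_add_distrib, sum_comp_cprev fun j => α (i j) (i j),
        sum_comp_cprev fun j => r (i j)]
      ring

theorem stmt_13 (K : ℕ) (hK : 2 ≤ K) (α : Fin K → Fin K → ℝ)
    (hα : ∀ i j, 0 ≤ α i j) (d : Fin K → ℝ) (hd : ∀ i, 0 ≤ d i)
    (m : ℕ) (hm : 2 ≤ m) (i : Fin m → Fin K) (hinj : Function.Injective i)
    (hpos : ∀ j : Fin m, 0 < d (i j))
    (hviol : ∑ j : Fin m, (α (i j) (i j) - α (i (cprev j)) (i j)) <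
      ∑ j : Fin m, d (i j)) :
    ¬ ∃ r : Fin K → ℝ, (∀ i, r i ≤ 0) ∧
      ∀ j : Fin m, d (i j) = α (i j) (i j) + r (i j) -
        max 0 (⨆ k : {k : Fin K // k ≠ i j}, (α (i j) k.1 + r k.1)) :=
  stmt_13_general K α d m hm i hinj hviol
end

section
/- Suppose α_{ij} ≥ 0 and the condition α_{ii} ≥ max_{j≠i} α_{ji} + max_{k≠i} α_{ik} holds for all i. Then for every subset S ⊆ {1,...,K}, the region P_S (defined with users in S silenced) is contained in P_∅ (the full polyhedral TIN region). Consequently the TIN region ⋃_S P_S equals P_∅. -/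
/-- The polyhedral TIN region with the users in `S` silenced. -/
def PS (K : ℕ) (α : Fin K → Fin K → ℝ) (S : Set (Fin K)) : Set (Fin K → ℝ) :=
  {d : Fin K → ℝ |
    (∀ i ∈ S, d i = 0) ∧
    (∀ j ∉ S, 0 ≤ d j ∧ d j ≤ α j j) ∧
    ∀ m : ℕ, 2 ≤ m → ∀ i : Fin m → Fin K, Function.Injective i →
      (∀ j, i j ∉ S) →
      ∑ j : Fin m, d (i j) ≤ ∑ j : Fin m, (α (i j) (i j) - α (i (cprev j)) (i j))}

/-- The TIN-optimality condition. -/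
noncomputable def TINopt (K : ℕ) (α : Fin K → Fin K → ℝ) : Prop :=
  ∀ i, (⨆ j : {j : Fin K // j ≠ i}, α j.1 i) + (⨆ k : {k : Fin K // k ≠ i}, α i k.1)
    ≤ α i i

/-!
A cycle through silenced users can be shortened: if `s` is silenced and sits between `u` and
`w`, then `d s = 0`, and replacing `u → s → w` by `u → w` changes the right-hand side by
`α u w + α s s - α u s - α s w ≥ 0` by TIN-optimality. Rotating each silenced user to the end
of the cycle and deleting it, we reach either a cycle of active users, where the constraint of
`P_S` applies, or a single active user `u`, where `d u ≤ α u u` suffices.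
-/

theorem cprev_eq_add_last {m : ℕ} (j : Fin (m + 1)) : cprev j = j + Fin.last m := by
  ext
  simp only [cprev, Fin.val_add, Fin.val_last]
  congr 1

theorem cprev_add {m : ℕ} (j r : Fin (m + 1)) : cprev (j + r) = cprev j + r := by
  simp only [cprev_eq_add_last, add_right_comm]

theorem cprev_zero {m : ℕ} : cprev (0 : Fin (m + 1)) = Fin.last m := by
  simp [cprev_eq_add_last]

theorem cprev_succ {m : ℕ} (j : Fin m) : cprev j.succ = j.castSucc := by
  ext
  simp only [cprev, Fin.val_succ, Fin.val_castSucc]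
  rw [show j.1 + 1 + (m + 1) - 1 = j.1 + (m + 1) by omega, Nat.add_mod_right,
    Nat.mod_eq_of_lt (by omega)]

section Cycle

variable {ι : Type*} (α : ι → ι → ℝ)

def cycleBound {m : ℕ} (i : Fin m → ι) : ℝ :=
  ∑ j, (α (i j) (i j) - α (i (cprev j)) (i j))

theorem cycleBound_comp_add_right {m : ℕ} (i : Fin (m + 1) → ι) (r : Fin (m + 1)) :
    cycleBound α (fun j => i (j + r)) = cycleBound α i := by
  simp only [cycleBound, ← cprev_add]
  exact Equiv.sum_comp (Equiv.addRight r) fun j => α (i j) (i j) - α (i (cprev j)) (i j)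

theorem cycleBound_eq_diag_sub_edges {m : ℕ} (i : Fin (m + 1) → ι) :
    cycleBound α i = ∑ j, α (i j) (i j) -
      (∑ j : Fin m, α (i j.castSucc) (i j.succ) + α (i (Fin.last m)) (i 0)) := by
  rw [cycleBound, Finset.sum_sub_distrib,
    Fin.sum_univ_succ (f := fun j => α (i (cprev j)) (i j))]
  simp only [cprev_zero, cprev_succ]
  ring

theorem cycleBound_fin_one (i : Fin 1 → ι) : cycleBound α i = 0 := by
  simp [cycleBound, Subsingleton.elim (cprev (0 : Fin 1)) 0]

/-- Deleting the last vertex `s` replaces the edges `u → s → w` by `u → w`. -/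
theorem cycleBound_eq_cycleBound_castSucc_add {n : ℕ} (i : Fin (n + 2) → ι) :
    cycleBound α i = cycleBound α (i ∘ Fin.castSucc) +
      (α (i (Fin.last _)) (i (Fin.last _)) - α (i (Fin.last n).castSucc) (i (Fin.last _))
        - α (i (Fin.last _)) (i 0) + α (i (Fin.last n).castSucc) (i 0)) := by
  rw [cycleBound_eq_diag_sub_edges, cycleBound_eq_diag_sub_edges,
    Fin.sum_univ_castSucc (f := fun j => α (i j) (i j)),
    Fin.sum_univ_castSucc (f := fun j => α (i j.castSucc) (i j.succ))]
  simp only [Function.comp_apply, Fin.succ_castSucc, Fin.succ_last, Fin.castSucc_zero]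
  ring

theorem cycleBound_castSucc_add_le
    (htin : ∀ u s w, u ≠ s → w ≠ s → α u s + α s w ≤ α s s)
    {n : ℕ} (i : Fin (n + 2) → ι) (hi : Function.Injective i) :
    cycleBound α (i ∘ Fin.castSucc) + α (i (Fin.last n).castSucc) (i 0) ≤
      cycleBound α i := by
  have hu : i (Fin.last n).castSucc ≠ i (Fin.last _) := hi.ne (Fin.castSucc_lt_last _).ne
  have hw : i 0 ≠ i (Fin.last _) := hi.ne (Fin.last_pos).ne
  have := htin _ _ _ hu hw
  rw [cycleBound_eq_cycleBound_castSucc_add]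
  linarith

end Cycle

section Silenced

variable {ι : Type*} {α : ι → ι → ℝ} {S : Set ι} {d : ι → ℝ}

theorem forall_sum_le_cycleBound_of_last_mem {n : ℕ}
    (hcyc : ∀ i : Fin (n + 2) → ι, Function.Injective i → (∀ j, i j ∉ S) →
      ∑ j, d (i j) ≤ cycleBound α i)
    (hlast : ∀ i : Fin (n + 2) → ι, Function.Injective i → i (Fin.last _) ∈ S →
      ∑ j, d (i j) ≤ cycleBound α i)
    (i : Fin (n + 2) → ι) (hi : Function.Injective i) : ∑ j, d (i j) ≤ cycleBound α i := by
  by_cases hS : ∀ j, i j ∉ S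
  · exact hcyc i hi hS
  obtain ⟨p, hp⟩ := not_forall_not.mp hS
  set r := p - Fin.last _
  have hrot := hlast (fun j => i (j + r)) (hi.comp (add_left_injective r))
    (by simpa [r] using hp)
  have hsum : ∑ j, d (i (j + r)) = ∑ j, d (i j) :=
    Fintype.sum_equiv (Equiv.addRight r) _ _ fun _ => rfl
  rwa [cycleBound_comp_add_right, hsum] at hrot

theorem sum_le_cycleBound (hα : ∀ u w, 0 ≤ α u w)
    (htin : ∀ u s w, u ≠ s → w ≠ s → α u s + α s w ≤ α s s)
    (hS : ∀ s ∈ S, d s = 0) (hd : ∀ j, d j ≤ α j j)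
    (hcyc : ∀ n (i : Fin (n + 2) → ι), Function.Injective i → (∀ j, i j ∉ S) →
      ∑ j, d (i j) ≤ cycleBound α i) :
    ∀ n (i : Fin (n + 2) → ι), Function.Injective i →
      ∑ j, d (i j) ≤ cycleBound α i := by
  intro n
  induction n with
  | zero =>
    refine forall_sum_le_cycleBound_of_last_mem (hcyc 0) fun i hi hlast => ?_
    have hdel := cycleBound_castSucc_add_le α htin i hi
    rw [cycleBound_fin_one] at hdel
    rw [Fin.sum_univ_castSucc, hS _ hlast, add_zero, Fin.sum_univ_one]
    exact (hd _).trans (by simpa using hdel)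
  | succ n ih =>
    refine forall_sum_le_cycleBound_of_last_mem (hcyc _) fun i hi hlast => ?_
    have hdel := cycleBound_castSucc_add_le α htin i hi
    have hsmall := ih (i ∘ Fin.castSucc) (hi.comp (Fin.castSucc_injective _))
    simp only [Function.comp_apply] at hsmall
    rw [Fin.sum_univ_castSucc, hS _ hlast, add_zero]
    linarith [hα (i (Fin.last _).castSucc) (i 0)]

end Silenced

theorem TINopt.add_le {K : ℕ} {α : Fin K → Fin K → ℝ} (h : TINopt K α) {u s w : Fin K}
    (hu : u ≠ s) (hw : w ≠ s) : α u s + α s w ≤ α s s := by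
  have hin := le_ciSup (Finite.bddAbove_range fun j : {j // j ≠ s} => α j.1 s) ⟨u, hu⟩
  have hout := le_ciSup (Finite.bddAbove_range fun k : {k // k ≠ s} => α s k.1) ⟨w, hw⟩
  linarith [h s]

theorem PS_subset_PS_empty {K : ℕ} {α : Fin K → Fin K → ℝ} (hα : ∀ i j, 0 ≤ α i j)
    (hcond : TINopt K α) (S : Set (Fin K)) : PS K α S ⊆ PS K α ∅ := by
  rintro d ⟨hS, hactive, hcyc⟩
  have hd : ∀ j, 0 ≤ d j ∧ d j ≤ α j j := fun j => by
    by_cases hj : j ∈ S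
    · simp [hS j hj, hα j j]
    · exact hactive j hj
  refine ⟨by simp, fun j _ => hd j, fun m hm i hi _ => ?_⟩
  obtain ⟨n, rfl⟩ : ∃ n, m = n + 2 := ⟨m - 2, by omega⟩
  exact sum_le_cycleBound hα (fun _ _ _ => hcond.add_le) hS (fun j => (hd j).2)
    (fun n i hi hiS => hcyc (n + 2) (by omega) i hi hiS) n i hi

theorem stmt_14_general (K : ℕ) (α : Fin K → Fin K → ℝ)
    (hα : ∀ i j, 0 ≤ α i j) (hcond : TINopt K α) :
    (∀ S : Set (Fin K), PS K α S ⊆ PS K α ∅) ∧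
    (⋃ S : Set (Fin K), PS K α S) = PS K α ∅ :=
  ⟨PS_subset_PS_empty hα hcond,
    (Set.iUnion_subset (PS_subset_PS_empty hα hcond)).antisymm (Set.subset_iUnion _ ∅)⟩

theorem stmt_14 (K : ℕ) (hK : 1 ≤ K) (α : Fin K → Fin K → ℝ)
    (hα : ∀ i j, 0 ≤ α i j) (hcond : TINopt K α) :
    (∀ S : Set (Fin K), PS K α S ⊆ PS K α ∅) ∧
    (⋃ S : Set (Fin K), PS K α S) = PS K α ∅ :=
  stmt_14_general K α hα hcond
end
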